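/- Let R be a commutative Bezout ring and let a ∈ R be a regular element. Then the quotient ring R/aR is a reduced ring if and only if a is an inpseudo-irreducible element of R. -/

import Mathlib

/-- A regular element: a nonzero element that is not a zero divisor. -/
def IsRegularElem {R : Type*} [CommRing R] (a : R) : Prop :=
  a ≠ 0 ∧ ∀ x : R, a * x = 0 → x = 0

/-- Stable range 2. -/
def HasStableRange2 (R : Type*) [CommRing R] : Prop :=
  ∀ a b c : R, Ideal.span {a, b, c} = ⊤ →
    ∃ x y : R, Ideal.span {a + c * x, b + c * y} = ⊤

/-- Stable range 1. -/
def HasStableRange1 (S : Type*) [CommRing S] : Prop :=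
  ∀ a b : S, Ideal.span {a, b} = ⊤ → ∃ y : S, IsUnit (a + b * y)

/-- Inpseudo-irreducible element: any factorization is comaximal. -/
def IsInpseudoIrreducible {R : Type*} [CommRing R] (a : R) : Prop :=
  ∀ b c : R, a = b * c → Ideal.span {b, c} = ⊤

/-- Pseudo-irreducible element. -/
def IsPseudoIrreducible {R : Type*} [CommRing R] (a : R) : Prop :=
  ∀ b c : R, a = b * c → ¬IsUnit b → ¬IsUnit c → Ideal.span {b, c} ≠ ⊤

/-- Adequate element of a Bezout ring. -/
def IsAdequateElem {R : Type*} [CommRing R] (a : R) : Prop :=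
  ∀ b : R, ∃ r s : R, a = r * s ∧ Ideal.span {r, b} = ⊤ ∧
    ∀ s' : R, ¬IsUnit s' → s' ∣ s → Ideal.span {s', b} ≠ ⊤

/-- Avoidable element. -/
def IsAvoidableElem {R : Type*} [CommRing R] (a : R) : Prop :=
  ∀ b c : R, Ideal.span {a, b, c} = ⊤ →
    ∃ r s : R, a = r * s ∧ Ideal.span {r, b} = ⊤ ∧ Ideal.span {s, c} = ⊤ ∧
      Ideal.span {r, s} = ⊤

/-- Gelfand element. -/
def IsGelfandElem {R : Type*} [CommRing R] (a : R) : Prop :=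
  ∀ b c : R, Ideal.span {a, b, c} = ⊤ →
    ∃ r s : R, a = r * s ∧ Ideal.span {r, b} = ⊤ ∧ Ideal.span {s, c} = ⊤

/-- Semipotent element. -/
def IsSemipotentElem {R : Type*} [CommRing R] (a : R) : Prop :=
  ∀ b : R,
    Ideal.Quotient.mk (Ideal.span {a}) b ∉
      Ideal.jacobson (⊥ : Ideal (R ⧸ Ideal.span ({a} : Set R))) →
    ∃ r s : R, ¬IsUnit r ∧ ¬IsUnit s ∧ a = r * s ∧
      Ideal.span {r, b} = ⊤ ∧ Ideal.span {r, s} = ⊤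

/-- Gelfand ring. -/
def IsGelfandRing (S : Type*) [CommRing S] : Prop :=
  ∀ a b : S, a + b = 1 → ∃ r s : S, (1 + a * r) * (1 + b * s) = 0

/-- Clean ring: every element is a unit plus an idempotent. -/
def IsCleanRing (S : Type*) [CommRing S] : Prop :=
  ∀ a : S, ∃ u e : S, IsUnit u ∧ IsIdempotentElem e ∧ a = u + e

/-- Von Neumann regular ring. -/
def IsVNRegularRing (S : Type*) [CommRing S] : Prop :=
  ∀ a : S, ∃ x : S, a = a * x * a

/-- Semiregular ring: S/J(S) is von Neumann regular and idempotents lift modulo J(S). -/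
def IsSemiregularRing (S : Type*) [CommRing S] : Prop :=
  IsVNRegularRing (S ⧸ Ideal.jacobson (⊥ : Ideal S)) ∧
  ∀ x : S, IsIdempotentElem (Ideal.Quotient.mk (Ideal.jacobson (⊥ : Ideal S)) x) →
    ∃ e : S, IsIdempotentElem e ∧
      Ideal.Quotient.mk (Ideal.jacobson (⊥ : Ideal S)) e =
        Ideal.Quotient.mk (Ideal.jacobson (⊥ : Ideal S)) x

/-- Semipotent ring: every principal ideal not contained in the Jacobson radical
contains a nonzero idempotent. -/
def IsSemipotentRing (S : Type*) [CommRing S] : Prop :=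
  ∀ b : S, ¬(Ideal.span {b} ≤ Ideal.jacobson (⊥ : Ideal S)) →
    ∃ e : S, e ≠ 0 ∧ IsIdempotentElem e ∧ e ∈ Ideal.span ({b} : Set S)

/-- Indecomposable ring: the only idempotents are 0 and 1. -/
def IsIndecomposableRing (S : Type*) [CommRing S] : Prop :=
  ∀ e : S, IsIdempotentElem e → e = 0 ∨ e = 1

/-- Semihereditary ring: every finitely generated ideal is projective. -/
def IsSemihereditaryRing (R : Type*) [CommRing R] : Prop :=
  ∀ I : Ideal R, I.FG → Module.Projective R I

/-- Regular range 1. -/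
def HasRegularRange1 (R : Type*) [CommRing R] : Prop :=
  ∀ a b : R, Ideal.span {a, b} = ⊤ → ∃ t : R, IsRegularElem (a + b * t)

/-- Gelfand range 1. -/
def HasGelfandRange1 (R : Type*) [CommRing R] : Prop :=
  ∀ a b : R, Ideal.span {a, b} = ⊤ → ∃ t : R, IsGelfandElem (a + b * t)

/-- A rectangular matrix admits diagonal reduction with successive divisibility
of the diagonal entries. -/
def AdmitsDiagReduction {R : Type*} [CommRing R] {n m : ℕ}
    (A : Matrix (Fin n) (Fin m) R) : Prop :=
  ∃ (P : Matrix (Fin n) (Fin n) R) (Q : Matrix (Fin m) (Fin m) R),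
    IsUnit P ∧ IsUnit Q ∧
    (∀ (i : Fin n) (j : Fin m), (i : ℕ) ≠ (j : ℕ) → (P * A * Q) i j = 0) ∧
    (∀ (k : ℕ) (hn : k + 1 < n) (hm : k + 1 < m),
      (P * A * Q) ⟨k, Nat.lt_of_succ_lt hn⟩ ⟨k, Nat.lt_of_succ_lt hm⟩ ∣
        (P * A * Q) ⟨k + 1, hn⟩ ⟨k + 1, hm⟩)

/-- Elementary divisor ring: every matrix admits diagonal reduction. -/
def IsElementaryDivisorRing (R : Type*) [CommRing R] : Prop :=
  ∀ (n m : ℕ) (A : Matrix (Fin n) (Fin m) R), AdmitsDiagReduction A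

/-!
`R ⧸ aR` is reduced exactly when `a` is radical. A regular radical element is squarefree: if
`a = z * z * w`, then `(z * w) ^ 2 = a * w`, so `z * w = a * t = (z * w) * (z * t)`, and cancelling
the regular element `z * w` makes `z` a unit. In a Bezout ring the factors of a squarefree element
have no common non-unit divisor, hence are comaximal. Conversely, if `a ∣ x ^ 2`, split off a gcd:
`a = d * c`, `x = d * x'` with `c, x'` comaximal. Comaximality of `d, c` turns `c ∣ d * x' ^ 2` into
`c ∣ x' ^ 2`, hence `c ∣ x'` and `a ∣ x`.
-/

theorem IsRegularElem.isRegular {R : Type*} [CommRing R] {a : R} (ha : IsRegularElem a) :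
    IsRegular a :=
  isLeftRegular_iff_isRegular.mp (isLeftRegular_iff_right_eq_zero_of_mul.mpr ha.2)

theorem Ideal.span_pair_eq_top_iff_isCoprime {R : Type*} [CommRing R] (x y : R) :
    Ideal.span {x, y} = ⊤ ↔ IsCoprime x y :=
  (Ideal.eq_top_iff_one _).trans Ideal.mem_span_pair

theorem IsRadical.squarefree_of_isRegular {M : Type*} [CommMonoid M] {x : M} (hx : IsRegular x)
    (h : IsRadical x) : Squarefree x := by
  rintro z ⟨w, rfl⟩
  obtain ⟨t, ht⟩ := h 2 (z * w) ⟨w, by simp only [pow_two, mul_assoc, mul_left_comm]⟩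
  have hzw : IsLeftRegular (z * w) := (mul_assoc z z w ▸ hx).of_mul_right.left
  have hzt : z * t = 1 := hzw <| calc
    z * w * (z * t) = z * z * w * t := by ac_rfl
    _ = z * w * 1 := by rw [← ht, mul_one]
  exact IsUnit.of_mul_eq_one t hzt

theorem Squarefree.isInpseudoIrreducible {R : Type*} [CommRing R] [IsBezout R] {a : R}
    (h : Squarefree a) : IsInpseudoIrreducible a := by
  rintro b c rfl
  rw [Ideal.span_pair_eq_top_iff_isCoprime, ← isRelPrime_iff_isCoprime]
  exact IsRelPrime.of_squarefree_mul h

theorem IsBezout.exists_eq_mul_isCoprime {R : Type*} [CommRing R] [IsBezout R] {x : R}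
    (hx : IsRegular x) (y : R) : ∃ d x' y', x = d * x' ∧ y = d * y' ∧ IsCoprime x' y' := by
  obtain ⟨x', hx'⟩ := IsBezout.gcd_dvd_left x y
  obtain ⟨y', hy'⟩ := IsBezout.gcd_dvd_right x y
  obtain ⟨u, v, huv⟩ := IsBezout.gcd_eq_sum x y
  refine ⟨_, x', y', hx', hy', u, v, ?_⟩
  have hd : IsLeftRegular (IsBezout.gcd x y) := (hx' ▸ hx).of_mul_left.left
  exact hd (by linear_combination huv - u * hx' - v * hy')

theorem IsInpseudoIrreducible.isRadical {R : Type*} [CommRing R] [IsBezout R] {a : R}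
    (ha : IsRegular a) (h : IsInpseudoIrreducible a) : IsRadical a := by
  rw [isRadical_iff_pow_one_lt 2 one_lt_two]
  rintro x ⟨s, hs⟩
  obtain ⟨d, c, x', rfl, rfl, hcx⟩ := IsBezout.exists_eq_mul_isCoprime ha x
  have hdc : IsCoprime d c := (Ideal.span_pair_eq_top_iff_isCoprime d c).mp (h d c rfl)
  have hcd : c ∣ x' * x' * d := ⟨s, ha.of_mul_left.left (by linear_combination hs)⟩
  exact mul_dvd_mul_left d (hcx.dvd_of_dvd_mul_left (hdc.symm.dvd_of_dvd_mul_right hcd))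

theorem stmt5 {R : Type*} [CommRing R] [IsBezout R] (a : R)
    (hreg : IsRegularElem a) :
    IsReduced (R ⧸ Ideal.span ({a} : Set R)) ↔ IsInpseudoIrreducible a := by
  have ha := hreg.isRegular
  rw [← Ideal.isRadical_iff_quotient_reduced, ← isRadical_iff_span_singleton]
  exact ⟨fun h ↦ (h.squarefree_of_isRegular ha).isInpseudoIrreducible, fun h ↦ h.isRadical ha⟩
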